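/- arXiv:2408.12660 — 2 statements merged into one kernel-verified Lean document; each statement's English description precedes it below -/
import Mathlib

section
/- Let a_0, a_1, b be nonzero complex numbers and define a_n = b · a_{n−1} a_{n−2} for n ≥ 2. Then a_n → 0 if and only if φ·log|b| + φ^{−1}·log|a_0| + log|a_1| < 0, where φ is the golden ratio. -/
/-!
Taking logarithms linearises the recurrence: `s n = log ‖b‖ + log ‖a n‖` satisfies
`s (n + 2) = s (n + 1) + s n`, hence `s n = c F_n + s 0 ψ ^ n` with `c = s 1 + φ⁻¹ s 0` and
`ψ = -φ⁻¹`. As `F_n → ∞` and `ψ ^ n → 0`, `a n → 0` iff `s n → -∞` iff `c < 0`, and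
`c = φ log ‖b‖ + φ⁻¹ log ‖a 0‖ + log ‖a 1‖` because `1 + φ⁻¹ = φ`.
-/

open Filter Topology Real

theorem Nat.tendsto_fib_atTop : Tendsto Nat.fib atTop atTop :=
  tendsto_atTop_mono' atTop (eventually_atTop.2 ⟨5, fun _ hn => Nat.le_fib_self hn⟩) tendsto_id

namespace Real

open scoped goldenRatio

theorem abs_goldenConj_lt_one : |ψ| < 1 :=
  abs_lt.2 ⟨neg_one_lt_goldenConj, goldenConj_neg.trans one_pos⟩

theorem eq_mul_fib_add_mul_goldenConj_pow {s : ℕ → ℝ} (hs : ∀ n, s (n + 2) = s (n + 1) + s n)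
    (n : ℕ) : s n = (s 1 + φ⁻¹ * s 0) * Nat.fib n + s 0 * ψ ^ n := by
  induction n using Nat.twoStepInduction with
  | zero => simp
  | one => rw [inv_goldenRatio]; simp; ring
  | more n ih₀ ih₁ =>
    rw [hs, ih₀, ih₁, Nat.fib_add_two, Nat.cast_add, pow_add ψ n 2, goldenConj_sq]
    ring

theorem tendsto_atBot_iff_of_fib_recurrence {s : ℕ → ℝ}
    (hs : ∀ n, s (n + 2) = s (n + 1) + s n) :
    Tendsto s atTop atBot ↔ s 1 + φ⁻¹ * s 0 < 0 := by
  have hs_eq := eq_mul_fib_add_mul_goldenConj_pow hs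
  have hψ : Tendsto (fun n : ℕ => s 0 * ψ ^ n) atTop (𝓝 0) := by
    simpa using (tendsto_pow_atTop_nhds_zero_of_abs_lt_one abs_goldenConj_lt_one).const_mul (s 0)
  constructor
  · intro h
    by_contra! hc
    obtain ⟨n, hs_lt, hψ_gt⟩ :=
      ((h.eventually_lt_atBot (-1)).and (hψ.eventually_const_lt neg_one_lt_zero)).exists
    have : s 0 * ψ ^ n ≤ s n := by
      rw [hs_eq n]
      exact le_add_of_nonneg_left (mul_nonneg hc (Nat.cast_nonneg _))
    linarith
  · intro hc
    rw [funext hs_eq]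
    exact ((tendsto_const_mul_atBot_of_neg hc).2
      (tendsto_natCast_atTop_atTop.comp Nat.tendsto_fib_atTop)).atBot_add hψ

theorem tendsto_nhds_zero_iff_tendsto_log_norm_atBot {α E : Type*} [NormedAddCommGroup E]
    {l : Filter α} {f : α → E} (hf : ∀ x, f x ≠ 0) :
    Tendsto f l (𝓝 0) ↔ Tendsto (fun x => log ‖f x‖) l atBot := by
  have h_exp_log : (fun x => exp (log ‖f x‖)) = fun x => ‖f x‖ :=
    funext fun x => exp_log (norm_pos_iff.2 (hf x))
  rw [← tendsto_exp_comp_nhds_zero, h_exp_log, tendsto_zero_iff_norm_tendsto_zero]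

end Real

theorem ne_zero_of_eq_mul_mul {M₀ : Type*} [MulZeroClass M₀] [NoZeroDivisors M₀] {a : ℕ → M₀}
    {b : M₀} (hb : b ≠ 0) (h0 : a 0 ≠ 0) (h1 : a 1 ≠ 0)
    (hrec : ∀ n, a (n + 2) = b * (a (n + 1) * a n)) (n : ℕ) : a n ≠ 0 := by
  induction n using Nat.twoStepInduction with
  | zero => exact h0
  | one => exact h1
  | more n ih₀ ih₁ => rw [hrec]; exact mul_ne_zero hb (mul_ne_zero ih₁ ih₀)

theorem stmt_11 (a : ℕ → ℂ) (b : ℂ) (hb : b ≠ 0) (h0 : a 0 ≠ 0) (h1 : a 1 ≠ 0)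
    (hrec : ∀ n ≥ 2, a n = b * (a (n - 1) * a (n - 2)))
    (φ : ℝ) (hφ : φ = (1 + Real.sqrt 5) / 2) :
    Filter.Tendsto a Filter.atTop (nhds 0) ↔
      φ * Real.log (‖b‖) + φ⁻¹ * Real.log (‖a 0‖) +
        Real.log (‖a 1‖) < 0 := by
  obtain rfl : φ = goldenRatio := hφ
  have hrec' : ∀ n, a (n + 2) = b * (a (n + 1) * a n) := fun n => hrec (n + 2) (by omega)
  have ha := ne_zero_of_eq_mul_mul hb h0 h1 hrec'
  set s : ℕ → ℝ := fun n => log ‖b‖ + log ‖a n‖ with hs_def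
  have hs : ∀ n, s (n + 2) = s (n + 1) + s n := fun n => by
    simp only [hs_def, hrec', norm_mul]
    rw [log_mul (norm_ne_zero_iff.2 hb) (by simp [ha]), log_mul (by simp [ha]) (by simp [ha])]
    ring
  have hc : s 1 + goldenRatio⁻¹ * s 0 =
      goldenRatio * log ‖b‖ + goldenRatio⁻¹ * log ‖a 0‖ + log ‖a 1‖ := by
    rw [inv_goldenRatio]
    linear_combination (-log ‖b‖) * goldenRatio_add_goldenConj
  have hshift : Tendsto (fun n => log ‖a n‖) atTop atBot ↔ Tendsto s atTop atBot :=
    (OrderIso.addLeft (log ‖b‖)).tendsto_atBot_iff.symm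
  rw [tendsto_nhds_zero_iff_tendsto_log_norm_atBot ha, hshift,
    tendsto_atBot_iff_of_fib_recurrence hs, hc]
end

section
/- Let j ≥ 2 and let b, a_0, ..., a_{j−1} be nonzero complex numbers with a_n = b · ∏_{k=1}^{j} a_{n−k} for n ≥ j. If |b| · ∏_{k=0}^{j−1} |a_k|^{1 − φ_j^{−k−1}} < 1, where φ_j is the j-nacci constant, then a_n → 0. -/
/-!
Taking logarithms, `L n = log ‖a n‖` satisfies `L (n + j) = log ‖b‖ + ∑_{i<j} L (n + i)`, and
`u = L + log ‖b‖ / (j - 1)` solves the homogeneous `j`-nacci recurrence. With `ψ = φ⁻¹`, the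
rescaled sequence `v n = ψ ^ n * u n` satisfies `v (n + j) = ∑_{i<j} ψ ^ (j - i) * v (n + i)`:
each term is a weighted average of the previous `j` ones. Such averages conserve the window sum
weighted by the partial sums of the weights, so every window contains a value below the
normalised invariant `Ω`, and upper bounds for `v` on tails contract geometrically towards `Ω`. The
hypothesis on `b` and the initial values says exactly that `Ω < 0`; hence eventually
`u n ≤ (Ω / 2) φ ^ n`, which tends to `-∞`, and `a n → 0`.
-/

open Finset Filter

section Averaging

variable {j : ℕ} {w v : ℕ → ℝ}

def cumWeight (w : ℕ → ℝ) (i : ℕ) : ℝ := ∑ l ∈ range (i + 1), w l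

def windowInvariant (w : ℕ → ℝ) (j : ℕ) (v : ℕ → ℝ) (n : ℕ) : ℝ :=
  ∑ i ∈ range j, cumWeight w i * v (n + i)

lemma windowInvariant_succ (hw1 : ∑ i ∈ range j, w i = 1)
    (hv : ∀ n, v (n + j) = ∑ i ∈ range j, w i * v (n + i)) (n : ℕ) :
    windowInvariant w j v (n + 1) = windowInvariant w j v n := by
  obtain ⟨j, rfl⟩ : ∃ j', j = j' + 1 :=
    Nat.exists_eq_succ_of_ne_zero (by rintro rfl; simp at hw1)
  have hlast : cumWeight w j * v (n + 1 + j) = ∑ i ∈ range (j + 1), w i * v (n + i) := by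
    rw [cumWeight, hw1, one_mul, add_assoc, add_comm 1 j, hv]
  have hstep (i : ℕ) : cumWeight w (i + 1) = cumWeight w i + w (i + 1) := sum_range_succ _ _
  have hshift (i : ℕ) : v (n + 1 + i) = v (n + (i + 1)) := by rw [add_assoc, add_comm 1]
  simp only [windowInvariant]
  rw [sum_range_succ, hlast, sum_range_succ', sum_range_succ' _ j]
  simp only [hstep, hshift, add_mul, sum_add_distrib]
  rw [show cumWeight w 0 = w 0 from sum_range_one w]
  ring

lemma windowInvariant_eq_windowInvariant_zero (hw1 : ∑ i ∈ range j, w i = 1)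
    (hv : ∀ n, v (n + j) = ∑ i ∈ range j, w i * v (n + i)) (n : ℕ) :
    windowInvariant w j v n = windowInvariant w j v 0 := by
  induction n with
  | zero => rfl
  | succ n ih => rw [windowInvariant_succ hw1 hv, ih]

lemma cumWeight_pos (hw : ∀ i < j, 0 < w i) {i : ℕ} (hi : i < j) : 0 < cumWeight w i :=
  sum_pos (fun l hl => hw l (by rw [mem_range] at hl; omega)) nonempty_range_add_one

lemma le_of_window_le (hw : ∀ i < j, 0 ≤ w i) (hw1 : ∑ i ∈ range j, w i = 1)
    (hv : ∀ n, v (n + j) = ∑ i ∈ range j, w i * v (n + i)) {n : ℕ} {B : ℝ}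
    (hB : ∀ i, n ≤ i → i < n + j → v i ≤ B) : ∀ i, n ≤ i → v i ≤ B := by
  intro i
  induction i using Nat.strong_induction_on with
  | _ i ih =>
    intro hni
    by_cases hi : i < n + j
    · exact hB i hni hi
    obtain ⟨m, rfl⟩ : ∃ m, i = m + j := ⟨i - j, by omega⟩
    calc v (m + j) = ∑ l ∈ range j, w l * v (m + l) := hv m
      _ ≤ ∑ l ∈ range j, w l * B := by
        refine sum_le_sum fun l hl => ?_
        rw [mem_range] at hl
        exact mul_le_mul_of_nonneg_left (ih _ (by omega) (by omega)) (hw l hl)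
      _ = B := by rw [← sum_mul, hw1, one_mul]

lemma le_sub_mul_of_le_sub {δ : ℝ} (hδ0 : 0 ≤ δ) (hδ : ∀ i < j, δ ≤ w i)
    (hw1 : ∑ i ∈ range j, w i = 1)
    (hv : ∀ n, v (n + j) = ∑ i ∈ range j, w i * v (n + i)) {n p q : ℕ} {B ε : ℝ}
    (hB : ∀ i, n ≤ i → v i ≤ B) (hε : 0 ≤ ε) (hnp : n ≤ p) (hpq : p ≤ q) (hqp : q < p + j)
    (hq : v q ≤ B - ε) : v (p + j) ≤ B - δ * ε := by
  have hmem : q - p ∈ range j := mem_range.2 (by omega)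
  have hw0 : 0 ≤ w (q - p) := hδ0.trans (hδ _ (mem_range.1 hmem))
  have hrest : ∑ l ∈ (range j).erase (q - p), w l * v (p + l) ≤ (1 - w (q - p)) * B :=
    calc ∑ l ∈ (range j).erase (q - p), w l * v (p + l)
        ≤ ∑ l ∈ (range j).erase (q - p), w l * B := by
          refine sum_le_sum fun l hl => ?_
          have hl := mem_range.1 (mem_of_mem_erase hl)
          exact mul_le_mul_of_nonneg_left (hB _ (by omega)) (hδ0.trans (hδ l hl))
      _ = (1 - w (q - p)) * B := by rw [← sum_mul, ← hw1, ← add_sum_erase _ _ hmem]; ring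
  have hsingle : w (q - p) * v q ≤ w (q - p) * (B - ε) := mul_le_mul_of_nonneg_left hq hw0
  have hδε : δ * ε ≤ w (q - p) * ε := mul_le_mul_of_nonneg_right (hδ _ (mem_range.1 hmem)) hε
  rw [hv p, ← add_sum_erase _ _ hmem, Nat.add_sub_cancel' hpq]
  linarith

lemma le_sub_sq_mul_of_le {δ : ℝ} (hδ0 : 0 ≤ δ) (hδ : ∀ i < j, δ ≤ w i)
    (hw1 : ∑ i ∈ range j, w i = 1)
    (hv : ∀ n, v (n + j) = ∑ i ∈ range j, w i * v (n + i)) {n m : ℕ} {B Ω : ℝ}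
    (hB : ∀ i, n ≤ i → v i ≤ B) (hΩB : Ω ≤ B) (hnm : n ≤ m) (hmn : m < n + j)
    (hm : v m ≤ Ω) : ∀ i, n + 2 * j ≤ i → v i ≤ B - δ ^ 2 * (B - Ω) := by
  have h₁ : v (m + j) ≤ B - δ * (B - Ω) :=
    le_sub_mul_of_le_sub hδ0 hδ hw1 hv hB (sub_nonneg.2 hΩB) hnm le_rfl (by omega) (by linarith)
  -- A second round of averaging spreads the low value `v (m + j)` over a whole window.
  have h₂ (i : ℕ) (hi₁ : m + j + 1 ≤ i) (hi₂ : i < m + j + 1 + j) :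
      v i ≤ B - δ ^ 2 * (B - Ω) := by
    obtain ⟨p, rfl⟩ : ∃ p, i = p + j := ⟨i - j, by omega⟩
    have := le_sub_mul_of_le_sub hδ0 hδ hw1 hv hB (mul_nonneg hδ0 (sub_nonneg.2 hΩB))
      (by omega : n ≤ p) (by omega : p ≤ m + j) (by omega) h₁
    linarith
  intro i hi
  exact le_of_window_le (fun l hl => hδ0.trans (hδ l hl)) hw1 hv h₂ i (by omega)

lemma exists_le_of_windowInvariant (hw : ∀ i < j, 0 < w i) (hw1 : ∑ i ∈ range j, w i = 1)
    (hv : ∀ n, v (n + j) = ∑ i ∈ range j, w i * v (n + i)) (n : ℕ) :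
    ∃ m, n ≤ m ∧ m < n + j ∧
      v m ≤ windowInvariant w j v 0 / ∑ i ∈ range j, cumWeight w i := by
  set Ω := windowInvariant w j v 0 / ∑ i ∈ range j, cumWeight w i
  have hj : 0 < j := Nat.pos_of_ne_zero (by rintro rfl; simp at hw1)
  have hT : 0 < ∑ i ∈ range j, cumWeight w i :=
    sum_pos (fun i hi => cumWeight_pos hw (mem_range.1 hi)) (nonempty_range_iff.2 hj.ne')
  have hsum : ∑ i ∈ range j, cumWeight w i * v (n + i) ≤ ∑ i ∈ range j, cumWeight w i * Ω := by
    rw [← sum_mul, ← windowInvariant, windowInvariant_eq_windowInvariant_zero hw1 hv,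
      mul_div_cancel₀ _ hT.ne']
  obtain ⟨i, hi, hle⟩ := exists_le_of_sum_le (nonempty_range_iff.2 hj.ne') hsum
  rw [mem_range] at hi
  exact ⟨n + i, by omega, by omega, le_of_mul_le_mul_left hle (cumWeight_pos hw hi)⟩

theorem eventually_lt_of_windowInvariant_div_lt (hw : ∀ i < j, 0 < w i)
    (hw1 : ∑ i ∈ range j, w i = 1)
    (hv : ∀ n, v (n + j) = ∑ i ∈ range j, w i * v (n + i)) {c : ℝ}
    (hc : windowInvariant w j v 0 / ∑ i ∈ range j, cumWeight w i < c) :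
    ∀ᶠ n in atTop, v n < c := by
  set Ω := windowInvariant w j v 0 / ∑ i ∈ range j, cumWeight w i
  have hj : (range j).Nonempty := nonempty_range_iff.2 (by rintro rfl; simp at hw1)
  obtain ⟨i₀, hi₀, hmin⟩ := exists_min_image (range j) w hj
  set δ := w i₀
  have hδ0 : 0 < δ := hw i₀ (mem_range.1 hi₀)
  have hδ : ∀ i < j, δ ≤ w i := fun i hi => hmin i (mem_range.2 hi)
  have hδ1 : δ ≤ 1 :=
    hw1 ▸ single_le_sum (fun i hi => (hw i (mem_range.1 hi)).le) hi₀
  obtain ⟨B₀, hB₀⟩ := ((range j).image v).exists_le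
  set B := max B₀ Ω
  have hB : ∀ i, 0 ≤ i → v i ≤ B :=
    le_of_window_le (fun i hi => (hw i hi).le) hw1 hv fun i _ hi =>
      (hB₀ _ (mem_image_of_mem v (mem_range.2 (by omega)))).trans (le_max_left _ _)
  have hr0 : 0 ≤ 1 - δ ^ 2 := by nlinarith
  have hr1 : 1 - δ ^ 2 < 1 := by nlinarith
  have hcontract (k : ℕ) : ∀ i, 2 * j * k ≤ i → v i ≤ Ω + (1 - δ ^ 2) ^ k * (B - Ω) := by
    induction k with
    | zero => simpa using hB
    | succ k ih =>
      obtain ⟨m, hm₁, hm₂, hm⟩ := exists_le_of_windowInvariant hw hw1 hv (2 * j * k)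
      have hΩ : Ω ≤ Ω + (1 - δ ^ 2) ^ k * (B - Ω) :=
        le_add_of_nonneg_right (mul_nonneg (pow_nonneg hr0 k) (sub_nonneg.2 (le_max_right _ _)))
      intro i hi
      have := le_sub_sq_mul_of_le hδ0.le hδ hw1 hv ih hΩ hm₁ hm₂ hm i
        (by rw [mul_add_one] at hi; omega)
      rw [pow_succ]
      linarith
  have hlim : Tendsto (fun k => Ω + (1 - δ ^ 2) ^ k * (B - Ω)) atTop (nhds Ω) := by
    simpa using (tendsto_pow_atTop_nhds_zero_of_lt_one hr0 hr1).mul_const (B - Ω) |>.const_add Ω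
  obtain ⟨k, hk⟩ := (hlim.eventually (gt_mem_nhds hc)).exists
  filter_upwards [eventually_ge_atTop (2 * j * k)] with i hi
  exact (hcontract k i hi).trans_lt hk

end Averaging

section Nacci

variable {j : ℕ} {ψ : ℝ}

lemma lt_one_of_sum_range_pow_succ_eq_one (hj : 2 ≤ j) (hψ0 : 0 < ψ)
    (hψ : ∑ i ∈ range j, ψ ^ (i + 1) = 1) : ψ < 1 := by
  have h : ∑ i ∈ range 2, ψ ^ (i + 1) ≤ 1 :=
    hψ ▸ sum_le_sum_of_subset_of_nonneg (range_subset_range.2 hj) fun i _ _ => by positivity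
  norm_num [sum_range_succ] at h
  nlinarith

lemma sum_range_pow_sub (hψ : ∑ i ∈ range j, ψ ^ (i + 1) = 1) :
    ∑ i ∈ range j, ψ ^ (j - i) = 1 := by
  rw [← hψ, ← sum_range_reflect]
  exact sum_congr rfl fun i hi => by rw [mem_range] at hi; congr 1; omega

lemma cumWeight_pow_sub_mul {i : ℕ} (hi : i < j) :
    cumWeight (fun l => ψ ^ (j - l)) i * ψ ^ i * (1 - ψ) = ψ ^ j * (1 - ψ ^ (i + 1)) := by
  have h : cumWeight (fun l => ψ ^ (j - l)) i * ψ ^ i = ψ ^ j * ∑ t ∈ range (i + 1), ψ ^ t := by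
    rw [cumWeight, sum_mul, mul_sum, ← sum_range_reflect]
    refine sum_congr rfl fun l hl => ?_
    rw [mem_range] at hl
    rw [← pow_add, ← pow_add]
    congr 1
    omega
  rw [h, mul_assoc, geom_sum_mul_neg]

theorem tendsto_atBot_of_sum_one_sub_pow_mul_neg {u : ℕ → ℝ} (hψ0 : 0 < ψ) (hψ1 : ψ < 1)
    (hψ : ∑ i ∈ range j, ψ ^ (i + 1) = 1) (hu : ∀ n, u (n + j) = ∑ i ∈ range j, u (n + i))
    (hneg : ∑ i ∈ range j, (1 - ψ ^ (i + 1)) * u i < 0) : Tendsto u atTop atBot := by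
  set w : ℕ → ℝ := fun i => ψ ^ (j - i)
  set v : ℕ → ℝ := fun n => ψ ^ n * u n
  have hw : ∀ i < j, 0 < w i := fun i _ => pow_pos hψ0 _
  have hw1 : ∑ i ∈ range j, w i = 1 := sum_range_pow_sub hψ
  have hv (n : ℕ) : v (n + j) = ∑ i ∈ range j, w i * v (n + i) := by
    simp only [v, w, hu, mul_sum]
    refine sum_congr rfl fun i hi => ?_
    rw [mem_range] at hi
    rw [← mul_assoc, ← pow_add]
    congr 2
    omega
  have hinv : windowInvariant w j v 0 * (1 - ψ) =
      ψ ^ j * ∑ i ∈ range j, (1 - ψ ^ (i + 1)) * u i := by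
    simp only [windowInvariant, sum_mul, mul_sum, zero_add]
    refine sum_congr rfl fun i hi => ?_
    have h : cumWeight w i * ψ ^ i * (1 - ψ) = ψ ^ j * (1 - ψ ^ (i + 1)) :=
      cumWeight_pow_sub_mul (mem_range.1 hi)
    linear_combination u i * h
  set Ω := windowInvariant w j v 0 / ∑ i ∈ range j, cumWeight w i
  have hΩ : Ω < 0 := by
    have hj : 0 < j := Nat.pos_of_ne_zero (by rintro rfl; simp at hψ)
    refine div_neg_of_neg_of_pos ?_ (sum_pos (fun i hi => cumWeight_pos hw (mem_range.1 hi))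
      (nonempty_range_iff.2 hj.ne'))
    have : windowInvariant w j v 0 * (1 - ψ) < 0 :=
      hinv ▸ mul_neg_of_pos_of_neg (pow_pos hψ0 j) hneg
    exact neg_of_mul_neg_left this (sub_pos.2 hψ1).le
  have hgrowth : Tendsto (fun n : ℕ => Ω / 2 * ψ⁻¹ ^ n) atTop atBot :=
    (tendsto_pow_atTop_atTop_of_one_lt (one_lt_inv₀ hψ0 |>.2 hψ1)).const_mul_atTop_of_neg
      (by linarith)
  refine tendsto_atBot_mono' _ ?_ hgrowth
  filter_upwards [eventually_lt_of_windowInvariant_div_lt hw hw1 hv (by linarith : Ω < Ω / 2)]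
    with n hn
  rw [inv_pow, ← div_eq_mul_inv, le_div_iff₀ (pow_pos hψ0 n), mul_comm]
  exact hn.le

end Nacci

lemma prod_Icc_sub_eq_prod_range {M : Type*} [CommMonoid M] (f : ℕ → M) (n j : ℕ) :
    ∏ k ∈ Icc 1 j, f (n + j - k) = ∏ i ∈ range j, f (n + i) := by
  rw [← Ico_add_one_right_eq_Icc, prod_Ico_eq_prod_range, Nat.add_sub_cancel, ← prod_range_reflect]
  exact prod_congr rfl fun i hi => by rw [mem_range] at hi; congr 1; omega

lemma ne_zero_of_prod_recurrence {M : Type*} [CommMonoidWithZero M] [NoZeroDivisors M]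
    [Nontrivial M] {j : ℕ} {b : M} {a : ℕ → M} (hb : b ≠ 0) (ha : ∀ k < j, a k ≠ 0)
    (hrec : ∀ n ≥ j, a n = b * ∏ k ∈ Icc 1 j, a (n - k)) (n : ℕ) : a n ≠ 0 := by
  induction n using Nat.strong_induction_on with
  | _ n ih =>
    by_cases hn : n < j
    · exact ha n hn
    rw [hrec n (not_lt.1 hn)]
    refine mul_ne_zero hb (prod_ne_zero_iff.2 fun k hk => ih _ ?_)
    rw [mem_Icc] at hk
    omega

lemma log_norm_add_recurrence {𝕜 : Type*} [NormedField 𝕜] {j : ℕ} {b : 𝕜} {a : ℕ → 𝕜}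
    (hb : b ≠ 0) (ha : ∀ n, a n ≠ 0) (hrec : ∀ n ≥ j, a n = b * ∏ k ∈ Icc 1 j, a (n - k))
    {γ : ℝ} (hγ : ((j : ℝ) - 1) * γ = Real.log ‖b‖) (n : ℕ) :
    Real.log ‖a (n + j)‖ + γ = ∑ i ∈ range j, (Real.log ‖a (n + i)‖ + γ) := by
  have hnorm (n : ℕ) : ‖a n‖ ≠ 0 := norm_ne_zero_iff.2 (ha n)
  have h : ‖a (n + j)‖ = ‖b‖ * ∏ i ∈ range j, ‖a (n + i)‖ := by
    rw [hrec _ le_add_self, norm_mul, norm_prod, prod_Icc_sub_eq_prod_range (‖a ·‖)]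
  rw [h, Real.log_mul (norm_ne_zero_iff.2 hb) (prod_ne_zero_iff.2 fun i _ => hnorm _),
    Real.log_prod fun i _ => hnorm _, sum_add_distrib, sum_const, card_range, nsmul_eq_mul]
  linarith

lemma sum_one_sub_pow_mul_log_add_neg {j : ℕ} {ψ β γ : ℝ} {x : ℕ → ℝ}
    (hψ : ∑ i ∈ range j, ψ ^ (i + 1) = 1) (hβ : 0 < β) (hx : ∀ k, 0 < x k)
    (hγ : ((j : ℝ) - 1) * γ = Real.log β)
    (hcond : β * ∏ k ∈ range j, x k ^ (1 - ψ ^ (k + 1)) < 1) :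
    ∑ i ∈ range j, (1 - ψ ^ (i + 1)) * (Real.log (x i) + γ) < 0 := by
  have hprod : 0 < ∏ k ∈ range j, x k ^ (1 - ψ ^ (k + 1)) :=
    prod_pos fun k _ => Real.rpow_pos_of_pos (hx k) _
  have hlog := Real.log_neg (mul_pos hβ hprod) hcond
  rw [Real.log_mul hβ.ne' hprod.ne',
    Real.log_prod fun k _ => (Real.rpow_pos_of_pos (hx k) _).ne'] at hlog
  simp only [fun i => Real.log_rpow (hx i)] at hlog
  have hweights : ∑ i ∈ range j, (1 - ψ ^ (i + 1)) = j - 1 := by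
    rw [sum_sub_distrib, hψ, sum_const, card_range, nsmul_eq_mul, mul_one]
  simp only [mul_add, sum_add_distrib, ← sum_mul, hweights, hγ]
  linarith

theorem stmt_18 (j : ℕ) (hj : 2 ≤ j) (b : ℂ) (hb : b ≠ 0)
    (a : ℕ → ℂ) (ha : ∀ k < j, a k ≠ 0)
    (hrec : ∀ n ≥ j, a n = b * ∏ k ∈ Finset.Icc 1 j, a (n - k))
    (φ : ℝ) (hφpos : 0 < φ)
    (hφ : ∑ k ∈ Finset.Icc 1 j, φ ^ (-(k : ℤ)) = 1)
    (hcond : ‖b‖ *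
      ∏ k ∈ Finset.range j, ‖a k‖ ^ ((1 : ℝ) - φ⁻¹ ^ (k + 1)) < 1) :
    Filter.Tendsto a Filter.atTop (nhds 0) := by
  have hψ : ∑ i ∈ range j, φ⁻¹ ^ (i + 1) = 1 := by
    rw [← Ico_add_one_right_eq_Icc, sum_Ico_eq_sum_range, Nat.add_sub_cancel] at hφ
    simpa only [zpow_neg, zpow_natCast, inv_pow, add_comm 1] using hφ
  have hψ0 : 0 < φ⁻¹ := inv_pos.2 hφpos
  have ha₀ := ne_zero_of_prod_recurrence hb ha hrec
  have hnorm (n : ℕ) : 0 < ‖a n‖ := norm_pos_iff.2 (ha₀ n)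
  obtain ⟨γ, hγ⟩ : ∃ γ : ℝ, ((j : ℝ) - 1) * γ = Real.log ‖b‖ :=
    ⟨_, mul_div_cancel₀ _ (sub_ne_zero.2 (by norm_cast; omega))⟩
  have hu : Tendsto (fun n => Real.log ‖a n‖ + γ) atTop atBot :=
    tendsto_atBot_of_sum_one_sub_pow_mul_neg hψ0
      (lt_one_of_sum_range_pow_succ_eq_one hj hψ0 hψ) hψ
      (log_norm_add_recurrence hb ha₀ hrec hγ)
      (sum_one_sub_pow_mul_log_add_neg hψ (norm_pos_iff.2 hb) hnorm hγ hcond)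
  have hlog : Tendsto (fun n => Real.log ‖a n‖) atTop atBot := by
    simpa using tendsto_atBot_add_const_right _ (-γ) hu
  rw [tendsto_zero_iff_norm_tendsto_zero]
  exact (Real.tendsto_exp_atBot.comp hlog).congr fun n => Real.exp_log (hnorm n)
end
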